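/- Let ε_1, …, ε_l be pairwise distinct positive real numbers and let W̄ = z_2 + z_1·∏_{i=1}^{l}(1 + T^{−ε_i}·z_2) over Λ. Then the critical value of W̄ at its critical point α_i = ( −T^{ε_i}·∏_{j≠i}(1 − T^{ε_i − ε_j})^{−1}, −T^{ε_i} ) equals −T^{ε_i}; in particular val(W̄(α_i)) = ε_i, and the l critical values of W̄ are pairwise distinct. -/

import Mathlib

open Finset MvPolynomial

noncomputable section

/-- The Novikov field `Λ` over `ℂ`, modelled as the field of Hahn series over `ℂ`
with value group `ℝ`. -/
abbrev Novikov : Type := HahnSeries ℝ ℂ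

/-- The monomial `T^r` with coefficient `1` and exponent `r`. -/
def Tpow (r : ℝ) : Novikov := HahnSeries.single r 1

/-- The valuation `val x ∈ ℝ` of `x ∈ Λ`: the smallest exponent occurring in `x`
(junk value `0` at `x = 0`). -/
def nval (x : Novikov) : ℝ := x.order

/-- `z` is a critical point of the two-variable polynomial `W` in `(Λ^×)²`: both
coordinates of `z` are nonzero and both partial derivatives of `W` vanish at `z`. -/
def PIsCritPt (W : MvPolynomial (Fin 2) Novikov) (z : Fin 2 → Novikov) : Prop :=
  (∀ i, z i ≠ 0) ∧ ∀ i : Fin 2, eval z (pderiv i W) = 0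

/-- `z` is a nondegenerate critical point of `W`: a critical point at which the determinant
of the Hessian matrix `(∂²W/∂z_i∂z_j)(z)` is nonzero. -/
def PIsNondegCritPt (W : MvPolynomial (Fin 2) Novikov) (z : Fin 2 → Novikov) : Prop :=
  PIsCritPt W z ∧
    (Matrix.of fun i j : Fin 2 => eval z (pderiv i (pderiv j W))).det ≠ 0

/-- The local model `W̄ = z₂ + z₁ ∏_{i=1}^{l} (1 + T^{-ε_i} z₂)` of the mirror potential near
a corner of the moment polytope after `l` non-toric blowups of sizes `ε_1, …, ε_l`. -/
def Wbar (l : ℕ) (ε : Fin l → ℝ) : MvPolynomial (Fin 2) Novikov :=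
  X 1 + X 0 * ∏ i, (1 + C (Tpow (-ε i)) * X 1)

/-- The critical point of `W̄` associated with the `i`-th blowup:
`α_i = (-T^{ε_i} ∏_{j ≠ i} (1 - T^{ε_i - ε_j})⁻¹, -T^{ε_i})`. -/
def alphPt (l : ℕ) (ε : Fin l → ℝ) (i : Fin l) : Fin 2 → Novikov :=
  ![-(Tpow (ε i)) * ∏ j ∈ Finset.univ.erase i, (1 - Tpow (ε i - ε j))⁻¹, -(Tpow (ε i))]
theorem Tpow_add (r s : ℝ) : Tpow (r + s) = Tpow r * Tpow s := by
  rw [Tpow, Tpow, Tpow, HahnSeries.single_mul_single, one_mul]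

theorem Tpow_zero : Tpow 0 = 1 := rfl

theorem one_add_Tpow_neg_mul_neg_Tpow (r : ℝ) : 1 + Tpow (-r) * -Tpow r = 0 := by
  have h : Tpow (-r) * Tpow r = 1 := by rw [← Tpow_add, neg_add_cancel, Tpow_zero]
  linear_combination -h

theorem nval_neg_Tpow (r : ℝ) : nval (-Tpow r) = r := by
  rw [nval, HahnSeries.order_neg, Tpow, HahnSeries.order_single one_ne_zero]

theorem eval_Wbar (l : ℕ) (ε : Fin l → ℝ) (z : Fin 2 → Novikov) :
    eval z (Wbar l ε) = z 1 + z 0 * ∏ i, (1 + Tpow (-ε i) * z 1) := by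
  simp only [Wbar, eval_add, eval_mul, eval_prod, map_one, eval_X, eval_C]

/-- The `i`-th factor `1 + T^{-ε_i} z₂` of `W̄` vanishes on this line. -/
theorem eval_Wbar_of_snd_eq_neg_Tpow (l : ℕ) (ε : Fin l → ℝ) (z : Fin 2 → Novikov) (i : Fin l)
    (hz : z 1 = -Tpow (ε i)) : eval z (Wbar l ε) = z 1 := by
  have hprod : ∏ j, (1 + Tpow (-ε j) * z 1) = 0 :=
    prod_eq_zero (mem_univ i) (hz ▸ one_add_Tpow_neg_mul_neg_Tpow (ε i))
  rw [eval_Wbar, hprod, mul_zero, add_zero]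

theorem eval_alphPt_Wbar (l : ℕ) (ε : Fin l → ℝ) (i : Fin l) :
    eval (alphPt l ε i) (Wbar l ε) = -Tpow (ε i) :=
  eval_Wbar_of_snd_eq_neg_Tpow l ε _ i rfl

theorem nontoric_critical_values_distinct_general
    (l : ℕ) (ε : Fin l → ℝ) (hinj : Function.Injective ε) :
    (∀ i, eval (alphPt l ε i) (Wbar l ε) = -(Tpow (ε i))) ∧
    (∀ i, nval (eval (alphPt l ε i) (Wbar l ε)) = ε i) ∧
    (∀ i j, i ≠ j → eval (alphPt l ε i) (Wbar l ε) ≠ eval (alphPt l ε j) (Wbar l ε)) := by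
  have hval : ∀ i, nval (eval (alphPt l ε i) (Wbar l ε)) = ε i := fun i => by
    rw [eval_alphPt_Wbar, nval_neg_Tpow]
  refine ⟨eval_alphPt_Wbar l ε, hval, fun i j hij h => hij (hinj ?_)⟩
  rw [← hval i, ← hval j, h]

/-- The critical value computation of Section 5.5 of the paper: for pairwise distinct
positive reals `ε_1, …, ε_l`, the critical value of
`W̄ = z₂ + z₁ ∏_{i=1}^{l} (1 + T^{-ε_i} z₂)` at its critical point
`α_i = (-T^{ε_i} ∏_{j ≠ i} (1 - T^{ε_i - ε_j})⁻¹, -T^{ε_i})` equals `-T^{ε_i}`; in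
particular its valuation is `ε_i`, and the `l` critical values are pairwise distinct. -/
theorem nontoric_critical_values_distinct
    (l : ℕ) (ε : Fin l → ℝ) (hpos : ∀ i, 0 < ε i) (hinj : Function.Injective ε) :
    (∀ i, eval (alphPt l ε i) (Wbar l ε) = -(Tpow (ε i))) ∧
    (∀ i, nval (eval (alphPt l ε i) (Wbar l ε)) = ε i) ∧
    (∀ i j, i ≠ j → eval (alphPt l ε i) (Wbar l ε) ≠ eval (alphPt l ε j) (Wbar l ε)) :=
  nontoric_critical_values_distinct_general l ε hinj

end
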